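/- Let ψ : ℝ² → ℝ be C² (coordinates (y,t)) and let S = {(ψ(y,t), y, t) : (y,t) ∈ ℝ²} ⊂ H^1 be the corresponding entire graph over the (y,t)-plane. With the defining function φ(x,y,t) = x − ψ(y,t) set p(x,y,t) = X1φ = 1 + (y/2)ψ_t(y,t), q(x,y,t) = X2φ = −ψ_y(y,t) − (x/2)ψ_t(y,t), and W = √(p²+q²). Assume: (i) S has empty characteristic locus, i.e. W > 0 at every point of S; (ii) S is H-minimal, i.e. X1(p/W) + X2(q/W) = 0 at every point of S (the derivatives being taken on the open set where W > 0); and (iii) S is not a vertical plane, i.e. there do not exist α, β ∈ ℝ with ψ(y,t) = αy + β for all (y,t). Then there exist g₀ ∈ H^1, a nonempty open interval I ⊆ ℝ, and a C² function G : I → ℝ with G'(t) > 0 for every t ∈ I, such that g₀ ∘ (yG(t), y, t) ∈ S for every (y,t) ∈ ℝ × I; that is, after a left-translation, S contains the strict graphical strip {(yG(t), y, t) : y ∈ ℝ, t ∈ I}. -/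

import Mathlib

/-- `ψ_t(y,t)`, the partial derivative of `ψ` in `t`. -/
noncomputable def psiT (ψ : ℝ × ℝ → ℝ) (y t : ℝ) : ℝ := deriv (fun t' => ψ (y, t')) t

/-- `ψ_y(y,t)`, the partial derivative of `ψ` in `y`. -/
noncomputable def psiY (ψ : ℝ × ℝ → ℝ) (y t : ℝ) : ℝ := deriv (fun y' => ψ (y', t)) y

/-- `p = X1φ = 1 + (y/2)ψ_t` for the defining function `φ(x,y,t) = x − ψ(y,t)`. -/
noncomputable def pfun (ψ : ℝ × ℝ → ℝ) (g : ℝ × ℝ × ℝ) : ℝ :=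
  1 + g.2.1 / 2 * psiT ψ g.2.1 g.2.2

/-- `q = X2φ = −ψ_y − (x/2)ψ_t`. -/
noncomputable def qfun (ψ : ℝ × ℝ → ℝ) (g : ℝ × ℝ × ℝ) : ℝ :=
  -psiY ψ g.2.1 g.2.2 - g.1 / 2 * psiT ψ g.2.1 g.2.2

/-- The angle function `W = √(p² + q²)`. -/
noncomputable def Wfun (ψ : ℝ × ℝ → ℝ) (g : ℝ × ℝ × ℝ) : ℝ :=
  Real.sqrt (pfun ψ g ^ 2 + qfun ψ g ^ 2)

/-- Partial derivative in `x` of a function on `ℝ³`. -/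
noncomputable def dX (f : ℝ × ℝ × ℝ → ℝ) (g : ℝ × ℝ × ℝ) : ℝ :=
  deriv (fun x => f (x, g.2.1, g.2.2)) g.1

/-- Partial derivative in `y` of a function on `ℝ³`. -/
noncomputable def dYc (f : ℝ × ℝ × ℝ → ℝ) (g : ℝ × ℝ × ℝ) : ℝ :=
  deriv (fun y => f (g.1, y, g.2.2)) g.2.1

/-- Partial derivative in `t` of a function on `ℝ³`. -/
noncomputable def dT (f : ℝ × ℝ × ℝ → ℝ) (g : ℝ × ℝ × ℝ) : ℝ :=
  deriv (fun t => f (g.1, g.2.1, t)) g.2.2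

/-- The left-invariant vector field `X1 = ∂/∂x − (y/2)∂/∂t` acting on functions. -/
noncomputable def X1op (f : ℝ × ℝ × ℝ → ℝ) (g : ℝ × ℝ × ℝ) : ℝ :=
  dX f g - g.2.1 / 2 * dT f g

/-- The left-invariant vector field `X2 = ∂/∂y + (x/2)∂/∂t` acting on functions. -/
noncomputable def X2op (f : ℝ × ℝ × ℝ → ℝ) (g : ℝ × ℝ × ℝ) : ℝ :=
  dYc f g + g.1 / 2 * dT f g

/-- The Heisenberg group law on `ℝ³`. -/
noncomputable def hmul (g g' : ℝ × ℝ × ℝ) : ℝ × ℝ × ℝ :=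
  (g.1 + g'.1, g.2.1 + g'.2.1, g.2.2 + g'.2.2 + (g.1 * g'.2.1 - g'.1 * g.2.1) / 2)


/-! Along the graph `x = ψ(y,t)` the H-minimal equation reduces to the degenerate equation
`P² ψ_yy + 2PR ψ_yt + R² ψ_tt = 0`, where `Z = (P, R)` is the projection to the `(y,t)`-plane of
the characteristic field `-q X₁ + p X₂`. The same equation makes the derivative of `Z` along `Z`
parallel to `Z`, so the integral curves of `Z` are straight lines, and makes `ψ` affine along them:
the graph is ruled by horizontal lines.

On the `t`-axis `Z(0,τ) = (1, ψ(0,τ)/2)`. Two of these lines with different slopes would meet at a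
zero of `Z`, i.e. at a characteristic point, so `ψ(0,·) ≡ x₀` and
`ψ(y, t + y x₀/2) = x₀ + y G(t)`; left translation by `(x₀, 0, 0)` turns this into the graphical
strip `(y G(t), y, t)`. Along the ruling, `P = 1 + y² G'(t)/2` never vanishes, which forces
`G' ≥ 0`, and `G' ≢ 0` because `S` is not a vertical plane. -/

lemma HasDerivAt.div_sqrt_sq_add_sq {a b : ℝ → ℝ} {da db x : ℝ} (ha : HasDerivAt a da x)
    (hb : HasDerivAt b db x) (hpos : 0 < a x ^ 2 + b x ^ 2) :
    HasDerivAt (fun x => a x / √(a x ^ 2 + b x ^ 2))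
      (b x * (b x * da - a x * db) / √(a x ^ 2 + b x ^ 2) ^ 3) x := by
  have hS : HasDerivAt (fun x => a x ^ 2 + b x ^ 2) (2 * a x * da + 2 * b x * db) x :=
    ((ha.fun_pow 2).fun_add (hb.fun_pow 2)).congr_deriv (by push_cast; ring)
  have hW0 : √(a x ^ 2 + b x ^ 2) ≠ 0 := (Real.sqrt_pos.2 hpos).ne'
  refine (ha.div (hS.sqrt hpos.ne') hW0).congr_deriv ?_
  field_simp
  linear_combination da * Real.sq_sqrt hpos.le

lemma HasDerivAt.div_sqrt_sq_add_sq' {a b : ℝ → ℝ} {da db x : ℝ} (ha : HasDerivAt a da x)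
    (hb : HasDerivAt b db x) (hpos : 0 < a x ^ 2 + b x ^ 2) :
    HasDerivAt (fun x => b x / √(a x ^ 2 + b x ^ 2))
      (a x * (a x * db - b x * da) / √(a x ^ 2 + b x ^ 2) ^ 3) x := by
  simpa only [add_comm (b _ ^ 2)] using hb.div_sqrt_sq_add_sq ha (by linarith)

lemma hasDerivAt_comp_add_smul {E F : Type*} [NormedAddCommGroup E] [NormedSpace ℝ E]
    [NormedAddCommGroup F] [NormedSpace ℝ F] {g : E → F} {w v : E} {s : ℝ}
    (hg : DifferentiableAt ℝ g (w + s • v)) :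
    HasDerivAt (fun s => g (w + s • v)) (fderiv ℝ g (w + s • v) v) s := by
  have hline : HasDerivAt (fun s : ℝ => w + s • v) v s := by
    simpa using ((hasDerivAt_id s).smul_const v).const_add w
  exact hg.hasFDerivAt.comp_hasDerivAt s hline

lemma fderiv_fderiv_apply {E F : Type*} [NormedAddCommGroup E] [NormedSpace ℝ E]
    [NormedAddCommGroup F] [NormedSpace ℝ F] {f : E → F} {w : E}
    (hf : DifferentiableAt ℝ (fderiv ℝ f) w) (u v : E) :
    fderiv ℝ (fun w => fderiv ℝ f w v) w u = fderiv ℝ (fderiv ℝ f) w u v := by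
  rw [fderiv_clm_apply hf (differentiableAt_const v)]
  simp

lemma eq_zero_of_hasDerivAt_eq_mul {F h : ℝ → ℝ} (hF : ∀ s, HasDerivAt F (h s * F s) s)
    (hh : Continuous h) (h0 : F 0 = 0) (s : ℝ) : F s = 0 := by
  set H := fun s => ∫ x in (0 : ℝ)..s, h x
  have hfactor : ∀ s, HasDerivAt (fun x => F x * Real.exp (-H x)) 0 s := fun s =>
    ((hF s).mul ((hh.integral_hasStrictDerivAt 0 s).hasDerivAt.neg.exp)).congr_deriv (by ring)
  have hconst := is_const_of_deriv_eq_zero (fun x => (hfactor x).differentiableAt)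
    (fun x => (hfactor x).deriv) s 0
  simpa [h0, Real.exp_ne_zero] using hconst

lemma nonneg_of_forall_one_add_sq_mul_ne_zero {m : ℝ} (h : ∀ y : ℝ, 1 + y ^ 2 / 2 * m ≠ 0) :
    0 ≤ m := by
  by_contra! hm
  apply h √(-2 / m)
  have := hm.ne
  rw [Real.sq_sqrt (div_nonneg_of_nonpos (by norm_num) hm.le)]
  field_simp
  ring

lemma exists_Ioo_forall_pos {g : ℝ → ℝ} (hg : Continuous g) {t₀ : ℝ} (ht₀ : 0 < g t₀) :
    ∃ a b, a < b ∧ ∀ t ∈ Set.Ioo a b, 0 < g t := by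
  obtain ⟨a, b, ⟨hat, htb⟩, hsub⟩ :=
    mem_nhds_iff_exists_Ioo_subset.1 (hg.continuousAt.preimage_mem_nhds (Ioi_mem_nhds ht₀))
  exact ⟨a, b, hat.trans htb, fun t ht => hsub ht⟩

lemma X1op_add_X2op_div_sqrt {p q : ℝ × ℝ × ℝ → ℝ} {x y t px py pt qx qy qt : ℝ}
    (hpx : HasDerivAt (fun x' => p (x', y, t)) px x)
    (hpy : HasDerivAt (fun y' => p (x, y', t)) py y)
    (hpt : HasDerivAt (fun t' => p (x, y, t')) pt t)
    (hqx : HasDerivAt (fun x' => q (x', y, t)) qx x)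
    (hqy : HasDerivAt (fun y' => q (x, y', t)) qy y)
    (hqt : HasDerivAt (fun t' => q (x, y, t')) qt t)
    (hpos : 0 < p (x, y, t) ^ 2 + q (x, y, t) ^ 2) :
    X1op (fun g => p g / √(p g ^ 2 + q g ^ 2)) (x, y, t)
        + X2op (fun g => q g / √(p g ^ 2 + q g ^ 2)) (x, y, t)
      = (q (x, y, t) ^ 2 * (px - y / 2 * pt)
          - p (x, y, t) * q (x, y, t) * (qx - y / 2 * qt + (py + x / 2 * pt))
          + p (x, y, t) ^ 2 * (qy + x / 2 * qt)) / √(p (x, y, t) ^ 2 + q (x, y, t) ^ 2) ^ 3 := by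
  simp only [X1op, X2op, dX, dYc, dT]
  rw [(hpx.div_sqrt_sq_add_sq hqx hpos).deriv, (hpt.div_sqrt_sq_add_sq hqt hpos).deriv,
    (hpy.div_sqrt_sq_add_sq' hqy hpos).deriv, (hpt.div_sqrt_sq_add_sq' hqt hpos).deriv]
  ring

lemma ContinuousLinearMap.apply_eq_fst_smul_add_snd_smul {M : Type*} [AddCommGroup M]
    [Module ℝ M] [TopologicalSpace M] (L : ℝ × ℝ →L[ℝ] M) (v : ℝ × ℝ) :
    L v = v.1 • L (1, 0) + v.2 • L (0, 1) := by
  conv_lhs => rw [show v = v.1 • ((1 : ℝ), (0 : ℝ)) + v.2 • ((0 : ℝ), (1 : ℝ)) by ext <;> simp]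
  rw [map_add, map_smul, map_smul]

section PlaneCalculus

variable {f : ℝ × ℝ → ℝ}

noncomputable def partialY (f : ℝ × ℝ → ℝ) (w : ℝ × ℝ) : ℝ := fderiv ℝ f w (1, 0)

noncomputable def partialT (f : ℝ × ℝ → ℝ) (w : ℝ × ℝ) : ℝ := fderiv ℝ f w (0, 1)

noncomputable def hessQuad (f : ℝ × ℝ → ℝ) (w v : ℝ × ℝ) : ℝ :=
  v.1 ^ 2 * partialY (partialY f) w + 2 * v.1 * v.2 * partialY (partialT f) w
    + v.2 ^ 2 * partialT (partialT f) w

lemma fderiv_apply_eq_partial (f : ℝ × ℝ → ℝ) (w v : ℝ × ℝ) :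
    fderiv ℝ f w v = v.1 * partialY f w + v.2 * partialT f w :=
  ContinuousLinearMap.apply_eq_fst_smul_add_snd_smul _ v

lemma hasDerivAt_partialY (hf : Differentiable ℝ f) (y t : ℝ) :
    HasDerivAt (fun y' => f (y', t)) (partialY f (y, t)) y :=
  (hf (y, t)).hasFDerivAt.comp_hasDerivAt y ((hasDerivAt_id y).prodMk (hasDerivAt_const y t))

lemma hasDerivAt_partialT (hf : Differentiable ℝ f) (y t : ℝ) :
    HasDerivAt (fun t' => f (y, t')) (partialT f (y, t)) t :=
  (hf (y, t)).hasFDerivAt.comp_hasDerivAt t ((hasDerivAt_const t y).prodMk (hasDerivAt_id t))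

lemma partialT_partialY (hf : ContDiff ℝ 2 f) (w : ℝ × ℝ) :
    partialT (partialY f) w = partialY (partialT f) w := by
  have hd : DifferentiableAt ℝ (fderiv ℝ f) w :=
    (hf.fderiv_right (m := 1) le_rfl).differentiable one_ne_zero w
  show fderiv ℝ (fun w => fderiv ℝ f w (1, 0)) w (0, 1)
    = fderiv ℝ (fun w => fderiv ℝ f w (0, 1)) w (1, 0)
  rw [fderiv_fderiv_apply hd, fderiv_fderiv_apply hd]
  exact hf.contDiffAt.isSymmSndFDerivAt (by simp) _ _

lemma contDiff_partialY (hf : ContDiff ℝ 2 f) : ContDiff ℝ 1 (partialY f) :=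
  (hf.fderiv_right le_rfl).clm_apply contDiff_const

lemma contDiff_partialT (hf : ContDiff ℝ 2 f) : ContDiff ℝ 1 (partialT f) :=
  (hf.fderiv_right le_rfl).clm_apply contDiff_const

lemma hasDerivAt_fderiv_comp_add_smul (hf : ContDiff ℝ 2 f) (w v : ℝ × ℝ) (s : ℝ) :
    HasDerivAt (fun s => fderiv ℝ f (w + s • v) v) (hessQuad f (w + s • v) v) s := by
  simp only [fderiv_apply_eq_partial f]
  have hY := hasDerivAt_comp_add_smul (s := s) (v := v) (w := w)
    ((contDiff_partialY hf).differentiable one_ne_zero _)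
  have hT := hasDerivAt_comp_add_smul (s := s) (v := v) (w := w)
    ((contDiff_partialT hf).differentiable one_ne_zero _)
  refine ((hY.const_mul v.1).add (hT.const_mul v.2)).congr_deriv ?_
  rw [fderiv_apply_eq_partial, fderiv_apply_eq_partial, partialT_partialY hf, hessQuad]
  ring

lemma hessQuad_smul (f : ℝ × ℝ → ℝ) (w v : ℝ × ℝ) (c : ℝ) :
    hessQuad f w (c • v) = c ^ 2 * hessQuad f w v := by
  simp only [hessQuad, Prod.smul_fst, Prod.smul_snd, smul_eq_mul]
  ring

lemma comp_add_smul_eq_of_hessQuad_eq_zero (hf : ContDiff ℝ 2 f) {w₀ z : ℝ × ℝ}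
    (hz : ∀ s : ℝ, hessQuad f (w₀ + s • z) z = 0) (s : ℝ) :
    f (w₀ + s • z) = f w₀ + s * fderiv ℝ f w₀ z := by
  have hslope : ∀ s : ℝ, fderiv ℝ f (w₀ + s • z) z = fderiv ℝ f w₀ z := fun s => by
    have hd := hasDerivAt_fderiv_comp_add_smul hf w₀ z
    simpa using is_const_of_deriv_eq_zero (fun s => (hd s).differentiableAt)
      (fun s => by rw [(hd s).deriv, hz]) s 0
  have hline : ∀ s : ℝ, HasDerivAt (fun s => f (w₀ + s • z) - s * fderiv ℝ f w₀ z) 0 s :=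
    fun s => ((hasDerivAt_comp_add_smul ((hf.differentiable two_ne_zero) _)).sub
      ((hasDerivAt_id s).mul_const _)).congr_deriv (by rw [hslope]; ring)
  have := is_const_of_deriv_eq_zero (fun s => (hline s).differentiableAt)
    (fun s => (hline s).deriv) s 0
  simp only [zero_smul, add_zero, zero_mul, sub_zero] at this
  linarith

end PlaneCalculus

lemma sq_add_sq_ne_zero_of_ne_zero {z : ℝ × ℝ} (hz : z ≠ 0) : z.1 ^ 2 + z.2 ^ 2 ≠ 0 := by
  intro h0
  obtain ⟨h1, h2⟩ := (add_eq_zero_iff_of_nonneg (sq_nonneg _) (sq_nonneg _)).1 h0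
  exact hz (Prod.ext (pow_eq_zero_iff two_ne_zero |>.1 h1) (pow_eq_zero_iff two_ne_zero |>.1 h2))

def wedge (u v : ℝ × ℝ) : ℝ := u.1 * v.2 - u.2 * v.1

lemma HasDerivAt.wedge_const {u : ℝ → ℝ × ℝ} {u' : ℝ × ℝ} {s : ℝ} (hu : HasDerivAt u u' s)
    (z : ℝ × ℝ) : HasDerivAt (fun s => wedge (u s) z) (wedge u' z) s := by
  have h1 : HasDerivAt (fun s => (u s).1) u'.1 s := by simpa using hu.hasFDerivAt.fst.hasDerivAt
  have h2 : HasDerivAt (fun s => (u s).2) u'.2 s := by simpa using hu.hasFDerivAt.snd.hasDerivAt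
  exact (h1.mul_const z.2).sub (h2.mul_const z.1)

lemma exists_eq_smul_of_wedge_eq_zero {u z : ℝ × ℝ} (hz : z ≠ 0) (h : wedge u z = 0) :
    ∃ c : ℝ, u = c • z := by
  have hN := sq_add_sq_ne_zero_of_ne_zero hz
  simp only [wedge] at h
  refine ⟨(u.1 * z.1 + u.2 * z.2) / (z.1 ^ 2 + z.2 ^ 2), Prod.ext ?_ ?_⟩
  · simp only [Prod.smul_fst, smul_eq_mul]
    field_simp
    linear_combination z.2 * h
  · simp only [Prod.smul_snd, smul_eq_mul]
    field_simp
    linear_combination (-z.1) * h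

lemma eq_zero_of_wedge_eq_zero_of_wedge_eq_zero {u a b : ℝ × ℝ} (ha : wedge u a = 0)
    (hb : wedge u b = 0) (hab : wedge a b ≠ 0) : u = 0 := by
  simp only [wedge] at ha hb hab
  refine Prod.ext (mul_left_cancel₀ hab ?_) (mul_left_cancel₀ hab ?_) <;>
    simp only [Prod.fst_zero, Prod.snd_zero]
  · linear_combination a.1 * hb - b.1 * ha
  · linear_combination a.2 * hb - b.2 * ha

/-- Writing `(u.1² + u.2²) z = ⟪z, u⟫ u + wedge u z • (-u.2, u.1)` and using `L u ∥ u`. -/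
lemma wedge_apply_eq_mul_wedge (L : ℝ × ℝ →L[ℝ] ℝ × ℝ) {u : ℝ × ℝ} (hu : u ≠ 0)
    (hL : wedge (L u) u = 0) (z : ℝ × ℝ) :
    wedge (L z) z = ((z.1 * u.1 + z.2 * u.2) * ((L u).1 * u.1 + (L u).2 * u.2)
      / (u.1 ^ 2 + u.2 ^ 2) ^ 2 + wedge (L (-u.2, u.1)) z / (u.1 ^ 2 + u.2 ^ 2)) * wedge u z := by
  have hN := sq_add_sq_ne_zero_of_ne_zero hu
  rw [L.apply_eq_fst_smul_add_snd_smul u] at hL ⊢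
  rw [L.apply_eq_fst_smul_add_snd_smul z, L.apply_eq_fst_smul_add_snd_smul (-u.2, u.1)]
  simp only [wedge, Prod.fst_add, Prod.snd_add, Prod.smul_fst, Prod.smul_snd, smul_eq_mul] at hL ⊢
  field_simp
  linear_combination (z.1 * u.1 + z.2 * u.2) ^ 2 * hL

def HasLinearIntegralCurves (Z : ℝ × ℝ → ℝ × ℝ) : Prop :=
  ∀ w₀ : ℝ × ℝ, ∀ s : ℝ, wedge (Z (w₀ + s • Z w₀)) (Z w₀) = 0

/-- `F s = wedge (Z (w₀ + s • Z w₀)) (Z w₀)` solves a linear ODE `F' = rate · F` with `F 0 = 0`. -/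
theorem hasLinearIntegralCurves_of_wedge_fderiv_eq_zero {Z : ℝ × ℝ → ℝ × ℝ}
    (hZ : ContDiff ℝ 1 Z) (hZ0 : ∀ w, Z w ≠ 0)
    (hZZ : ∀ w, wedge (fderiv ℝ Z w (Z w)) (Z w) = 0) : HasLinearIntegralCurves Z := by
  intro w₀ s
  set z := Z w₀
  set u : ℝ → ℝ × ℝ := fun s => Z (w₀ + s • z)
  set L : ℝ → ℝ × ℝ →L[ℝ] ℝ × ℝ := fun s => fderiv ℝ Z (w₀ + s • z)
  have hu : Continuous u := hZ.continuous.comp (by fun_prop)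
  have hL : Continuous L := (hZ.continuous_fderiv one_ne_zero).comp (by fun_prop)
  have hN : ∀ s, (u s).1 ^ 2 + (u s).2 ^ 2 ≠ 0 := fun s => sq_add_sq_ne_zero_of_ne_zero (hZ0 _)
  set rate : ℝ → ℝ := fun s => (z.1 * (u s).1 + z.2 * (u s).2) * ((L s (u s)).1 * (u s).1
      + (L s (u s)).2 * (u s).2) / ((u s).1 ^ 2 + (u s).2 ^ 2) ^ 2
      + wedge (L s (-(u s).2, (u s).1)) z / ((u s).1 ^ 2 + (u s).2 ^ 2)
  have hrate : Continuous rate := by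
    clear_value u L
    simp only [rate, wedge]
    fun_prop (disch := first | exact hN | exact fun s => pow_ne_zero 2 (hN s))
  refine eq_zero_of_hasDerivAt_eq_mul (F := fun s => wedge (u s) z) (fun s => ?_) hrate
    (by simp only [u, zero_smul, add_zero, wedge]; ring) s
  have := (hasDerivAt_comp_add_smul (w := w₀) (v := z) (s := s)
    ((hZ.differentiable one_ne_zero) _)).wedge_const z
  rwa [wedge_apply_eq_mul_wedge _ (hZ0 _) (hZZ _)] at this

section LinearIntegralCurves

variable {Z : ℝ × ℝ → ℝ × ℝ} (hZ0 : ∀ w, Z w ≠ 0) (hZ : HasLinearIntegralCurves Z)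
include hZ0 hZ

lemma HasLinearIntegralCurves.eq_of_apply_zero_left {κ : ℝ → ℝ} (hκ : ∀ τ, Z (0, τ) = (1, κ τ))
    (τ₁ τ₂ : ℝ) : κ τ₁ = κ τ₂ := by
  by_contra hne
  have hne' : κ τ₁ - κ τ₂ ≠ 0 := sub_ne_zero.2 hne
  set s := (τ₂ - τ₁) / (κ τ₁ - κ τ₂)
  have hmeet : ((0 : ℝ), τ₁) + s • Z (0, τ₁) = (0, τ₂) + s • Z (0, τ₂) := by
    rw [hκ, hκ]
    ext
    · simp
    · simp only [Prod.snd_add, Prod.smul_snd, smul_eq_mul, s]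
      field_simp
      ring
  refine hZ0 _ (eq_zero_of_wedge_eq_zero_of_wedge_eq_zero (b := Z (0, τ₂)) (hZ (0, τ₁) s) ?_ ?_)
  · rw [hmeet]; exact hZ (0, τ₂) s
  · rw [hκ, hκ]; simp only [wedge]; intro h; exact hne' (by linarith)

lemma HasLinearIntegralCurves.fst_ne_zero {c : ℝ} (hc : ∀ τ, Z (0, τ) = (1, c)) (w : ℝ × ℝ) :
    (Z w).1 ≠ 0 := by
  intro h1
  have hw : w = ((0 : ℝ), w.2 - w.1 * c) + w.1 • Z (0, w.2 - w.1 * c) := by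
    rw [hc]; ext <;> simp
  have hpar := hZ (0, w.2 - w.1 * c) w.1
  rw [← hw, hc] at hpar
  simp only [wedge, h1] at hpar
  exact hZ0 w (Prod.ext h1 (by simp only [Prod.snd_zero]; linarith))

theorem HasLinearIntegralCurves.comp_add_smul_eq {f : ℝ × ℝ → ℝ} (hf : ContDiff ℝ 2 f)
    (hfZ : ∀ w, hessQuad f w (Z w) = 0) (w₀ : ℝ × ℝ) (s : ℝ) :
    f (w₀ + s • Z w₀) = f w₀ + s * fderiv ℝ f w₀ (Z w₀) := by
  refine comp_add_smul_eq_of_hessQuad_eq_zero hf (fun s => ?_) s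
  obtain ⟨μ, hμ⟩ := exists_eq_smul_of_wedge_eq_zero (hZ0 w₀) (hZ w₀ s)
  have hμ0 : μ ≠ 0 := by rintro rfl; exact hZ0 _ (by simpa using hμ)
  have := hfZ (w₀ + s • Z w₀)
  rw [hμ, hessQuad_smul] at this
  exact (mul_eq_zero.1 this).resolve_left (pow_ne_zero 2 hμ0)

end LinearIntegralCurves

section Graph

variable {ψ : ℝ × ℝ → ℝ}

noncomputable def graphP (ψ : ℝ × ℝ → ℝ) (w : ℝ × ℝ) : ℝ := 1 + w.1 / 2 * partialT ψ w

noncomputable def graphQ (ψ : ℝ × ℝ → ℝ) (w : ℝ × ℝ) : ℝ :=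
  -partialY ψ w - ψ w / 2 * partialT ψ w

noncomputable def graphR (ψ : ℝ × ℝ → ℝ) (w : ℝ × ℝ) : ℝ :=
  (w.1 * graphQ ψ w + ψ w * graphP ψ w) / 2

/-- With `p = graphP ψ w`, `q = graphQ ψ w` the values of `pfun`, `qfun` at the graph point
`(ψ w, w)`, this is the `(y,t)`-part of the characteristic field `-q X₁ + p X₂` there. -/
noncomputable def charField (ψ : ℝ × ℝ → ℝ) (w : ℝ × ℝ) : ℝ × ℝ := (graphP ψ w, graphR ψ w)

lemma pfun_eq (hψ : Differentiable ℝ ψ) (x y t : ℝ) :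
    pfun ψ (x, y, t) = 1 + y / 2 * partialT ψ (y, t) := by
  rw [pfun, psiT, (hasDerivAt_partialT hψ y t).deriv]

lemma qfun_eq (hψ : Differentiable ℝ ψ) (x y t : ℝ) :
    qfun ψ (x, y, t) = -partialY ψ (y, t) - x / 2 * partialT ψ (y, t) := by
  rw [qfun, psiT, psiY, (hasDerivAt_partialT hψ y t).deriv, (hasDerivAt_partialY hψ y t).deriv]

lemma fderiv_charField_eq_neg_graphQ (ψ : ℝ × ℝ → ℝ) (w : ℝ × ℝ) :
    fderiv ℝ ψ w (charField ψ w) = -graphQ ψ w := by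
  rw [fderiv_apply_eq_partial]
  simp only [charField, graphR, graphP, graphQ]
  ring

lemma charField_ne_zero (hψ : Differentiable ℝ ψ)
    (hchar : ∀ y t : ℝ, 0 < Wfun ψ (ψ (y, t), y, t)) (w : ℝ × ℝ) : charField ψ w ≠ 0 := by
  intro h0
  have hQ : graphQ ψ w = 0 := by rw [← neg_eq_zero, ← fderiv_charField_eq_neg_graphQ, h0, map_zero]
  have hP : graphP ψ w = 0 := congrArg Prod.fst h0
  have hW := hchar w.1 w.2
  rw [Wfun, pfun_eq hψ, qfun_eq hψ] at hW
  simp only [graphP, graphQ] at hP hQ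
  simp [hP, hQ] at hW

lemma charField_zero_left (τ : ℝ) : charField ψ (0, τ) = (1, ψ (0, τ) / 2) := by
  simp [charField, graphP, graphR]

lemma X1op_add_X2op_graph (hψ : ContDiff ℝ 2 ψ) {y t : ℝ} (hW : 0 < Wfun ψ (ψ (y, t), y, t)) :
    X1op (fun g => pfun ψ g / Wfun ψ g) (ψ (y, t), y, t)
        + X2op (fun g => qfun ψ g / Wfun ψ g) (ψ (y, t), y, t)
      = -hessQuad ψ (y, t) (charField ψ (y, t)) / Wfun ψ (ψ (y, t), y, t) ^ 3 := by
  have hd : Differentiable ℝ ψ := hψ.differentiable two_ne_zero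
  have hU := (contDiff_partialY hψ).differentiable one_ne_zero
  have hV := (contDiff_partialT hψ).differentiable one_ne_zero
  set x := ψ (y, t)
  have hpx : HasDerivAt (fun x' => pfun ψ (x', y, t)) 0 x := by
    simp only [pfun_eq hd]; exact hasDerivAt_const _ _
  have hpy : HasDerivAt (fun y' => pfun ψ (x, y', t))
      (partialT ψ (y, t) / 2 + y / 2 * partialY (partialT ψ) (y, t)) y := by
    simp only [pfun_eq hd]
    exact ((((hasDerivAt_id y).div_const 2).mul (hasDerivAt_partialY hV y t)).const_add 1).congr_deriv
      (by simp only [id]; ring)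
  have hpt : HasDerivAt (fun t' => pfun ψ (x, y, t')) (y / 2 * partialT (partialT ψ) (y, t)) t := by
    simp only [pfun_eq hd]
    exact ((hasDerivAt_partialT hV y t).const_mul (y / 2)).const_add 1
  have hqx : HasDerivAt (fun x' => qfun ψ (x', y, t)) (-(partialT ψ (y, t) / 2)) x := by
    simp only [qfun_eq hd]
    exact ((((hasDerivAt_id x).div_const 2).mul_const _).const_sub _).congr_deriv (by ring)
  have hqy : HasDerivAt (fun y' => qfun ψ (x, y', t))
      (-partialY (partialY ψ) (y, t) - x / 2 * partialY (partialT ψ) (y, t)) y := by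
    simp only [qfun_eq hd]
    exact (hasDerivAt_partialY hU y t).neg.sub ((hasDerivAt_partialY hV y t).const_mul (x / 2))
  have hqt : HasDerivAt (fun t' => qfun ψ (x, y, t'))
      (-partialT (partialY ψ) (y, t) - x / 2 * partialT (partialT ψ) (y, t)) t := by
    simp only [qfun_eq hd]
    exact (hasDerivAt_partialT hU y t).neg.sub ((hasDerivAt_partialT hV y t).const_mul (x / 2))
  refine (X1op_add_X2op_div_sqrt hpx hpy hpt hqx hqy hqt (Real.sqrt_pos.1 hW)).trans ?_
  rw [show √(pfun ψ (x, y, t) ^ 2 + qfun ψ (x, y, t) ^ 2) = Wfun ψ (x, y, t) from rfl]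
  congr 1
  rw [pfun_eq hd, qfun_eq hd, partialT_partialY hψ]
  simp only [hessQuad, charField, graphP, graphR, graphQ]
  ring

lemma contDiff_charField (hψ : ContDiff ℝ 2 ψ) : ContDiff ℝ 1 (charField ψ) := by
  have hψ1 : ContDiff ℝ 1 ψ := hψ.of_le (by norm_num)
  have hU := contDiff_partialY hψ
  have hV := contDiff_partialT hψ
  unfold charField graphR graphP graphQ
  fun_prop

lemma wedge_fderiv_charField (hψ : ContDiff ℝ 2 ψ) (w : ℝ × ℝ) :
    wedge (fderiv ℝ (charField ψ) w (charField ψ w)) (charField ψ w)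
      = w.1 / 2 * hessQuad ψ w (charField ψ w) := by
  set v := charField ψ w
  have hline : ∀ {F : Type} [NormedAddCommGroup F] [NormedSpace ℝ F] {g : ℝ × ℝ → F},
      Differentiable ℝ g → HasDerivAt (fun s : ℝ => g (w + s • v)) (fderiv ℝ g w v) 0 :=
    fun hg => by simpa using hasDerivAt_comp_add_smul (w := w) (v := v) (s := 0) (hg _)
  have hψl := hline (hψ.differentiable two_ne_zero)
  have hUl := hline ((contDiff_partialY hψ).differentiable one_ne_zero)
  have hVl := hline ((contDiff_partialT hψ).differentiable one_ne_zero)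
  have hfst : HasDerivAt (fun s : ℝ => (w + s • v).1) v.1 0 := by
    simpa [fderiv_fst] using hline (g := Prod.fst) differentiable_fst
  have hP : HasDerivAt (fun s : ℝ => graphP ψ (w + s • v)) _ 0 :=
    ((hfst.div_const 2).mul hVl).const_add 1
  have hQ : HasDerivAt (fun s : ℝ => graphQ ψ (w + s • v)) _ 0 :=
    hUl.neg.sub ((hψl.div_const 2).mul hVl)
  have hR : HasDerivAt (fun s : ℝ => graphR ψ (w + s • v)) _ 0 :=
    ((hfst.mul hQ).add (hψl.mul hP)).div_const 2
  rw [(hline ((contDiff_charField hψ).differentiable one_ne_zero)).unique (hP.prodMk hR)]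
  simp only [zero_smul, add_zero, fderiv_apply_eq_partial, wedge, hessQuad, v, charField,
    graphP, graphR, graphQ, partialT_partialY hψ]
  ring

section Minimal

variable (hψ : ContDiff ℝ 2 ψ) (hchar : ∀ y t : ℝ, 0 < Wfun ψ (ψ (y, t), y, t))
    (hmin : ∀ y t : ℝ,
      X1op (fun g => pfun ψ g / Wfun ψ g) (ψ (y, t), y, t)
        + X2op (fun g => qfun ψ g / Wfun ψ g) (ψ (y, t), y, t) = 0)
include hψ hchar hmin

lemma hessQuad_charField_eq_zero (w : ℝ × ℝ) : hessQuad ψ w (charField ψ w) = 0 := by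
  have h := hmin w.1 w.2
  rw [X1op_add_X2op_graph hψ (hchar w.1 w.2), div_eq_zero_iff, neg_eq_zero] at h
  exact h.resolve_right (pow_ne_zero 3 (hchar w.1 w.2).ne')

theorem hasLinearIntegralCurves_charField : HasLinearIntegralCurves (charField ψ) :=
  hasLinearIntegralCurves_of_wedge_fderiv_eq_zero (contDiff_charField hψ)
    (charField_ne_zero (hψ.differentiable two_ne_zero) hchar) fun w => by
      rw [wedge_fderiv_charField hψ, hessQuad_charField_eq_zero hψ hchar hmin, mul_zero]

lemma charField_zero_left_eq (τ : ℝ) : charField ψ (0, τ) = (1, ψ (0, 0) / 2) := by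
  rw [charField_zero_left, (hasLinearIntegralCurves_charField hψ hchar hmin).eq_of_apply_zero_left
    (charField_ne_zero (hψ.differentiable two_ne_zero) hchar) charField_zero_left τ 0]

theorem graph_eq_strip (y t : ℝ) :
    ψ (y, t + y * (ψ (0, 0) / 2)) = ψ (0, 0) + y * (ψ (1, t + ψ (0, 0) / 2) - ψ (0, 0)) := by
  have hline := (hasLinearIntegralCurves_charField hψ hchar hmin).comp_add_smul_eq
    (charField_ne_zero (hψ.differentiable two_ne_zero) hchar) hψ
    (hessQuad_charField_eq_zero hψ hchar hmin) (0, t)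
  have hax := charField_zero_left_eq hψ hchar hmin t
  have hψ0 : ψ (0, t) = ψ (0, 0) := by
    rw [charField_zero_left, Prod.mk.injEq] at hax
    linarith [hax.2]
  simp only [hax, Prod.smul_mk, smul_eq_mul, Prod.mk_add_mk, zero_add, mul_one, hψ0] at hline
  have h1 := hline 1
  rw [one_mul] at h1
  rw [hline y, h1]
  ring

lemma graphP_ne_zero (w : ℝ × ℝ) : graphP ψ w ≠ 0 :=
  (hasLinearIntegralCurves_charField hψ hchar hmin).fst_ne_zero
    (charField_ne_zero (hψ.differentiable two_ne_zero) hchar)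
    (charField_zero_left_eq hψ hchar hmin) w

end Minimal

end Graph

section Strip

variable {f : ℝ × ℝ → ℝ} {a c : ℝ} {G : ℝ → ℝ}

lemma partialT_eq_of_strip (hf : Differentiable ℝ f) (hG : Differentiable ℝ G)
    (hstrip : ∀ y t, f (y, t + y * c) = a + y * G t) (y t : ℝ) :
    partialT f (y, t + y * c) = y * deriv G t := by
  have h := (hasDerivAt_partialT hf y (t + y * c)).comp_add_const t (y * c)
  simp only [hstrip] at h
  exact h.unique (((hG t).hasDerivAt.const_mul y).const_add a)

lemma exists_deriv_ne_zero_of_strip (hG : Differentiable ℝ G)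
    (hstrip : ∀ y t, f (y, t + y * c) = a + y * G t)
    (hnp : ¬ ∃ α β : ℝ, ∀ y t : ℝ, f (y, t) = α * y + β) : ∃ t, deriv G t ≠ 0 := by
  by_contra! h0
  refine hnp ⟨G 0, a, fun y t => ?_⟩
  have := hstrip y (t - y * c)
  rw [sub_add_cancel, is_const_of_deriv_eq_zero hG h0 _ 0] at this
  rw [this]
  ring

end Strip

/-- if the entire graph `S = {(ψ(y,t), y, t)}` has empty characteristic locus,
is H-minimal, and is not a vertical plane, then after a left-translation `S` contains a strict
graphical strip `{(yG(t), y, t) : y ∈ ℝ, t ∈ I}` with `G' > 0` on the open interval `I`. -/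
theorem stmt19 (ψ : ℝ × ℝ → ℝ) (hψ : ContDiff ℝ 2 ψ)
    (hchar : ∀ y t : ℝ, 0 < Wfun ψ (ψ (y, t), y, t))
    (hmin : ∀ y t : ℝ,
      X1op (fun g => pfun ψ g / Wfun ψ g) (ψ (y, t), y, t)
        + X2op (fun g => qfun ψ g / Wfun ψ g) (ψ (y, t), y, t) = 0)
    (hnp : ¬ ∃ α β : ℝ, ∀ y t : ℝ, ψ (y, t) = α * y + β) :
    ∃ g₀ : ℝ × ℝ × ℝ, ∃ a b : ℝ, a < b ∧ ∃ G : ℝ → ℝ,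
      ContDiffOn ℝ 2 G (Set.Ioo a b) ∧
      (∀ t ∈ Set.Ioo a b, 0 < deriv G t) ∧
      ∀ y : ℝ, ∀ t ∈ Set.Ioo a b,
        hmul g₀ (y * G t, y, t) ∈ {g : ℝ × ℝ × ℝ | g.1 = ψ (g.2.1, g.2.2)} := by
  set x₀ := ψ (0, 0)
  set G : ℝ → ℝ := fun t => ψ (1, t + x₀ / 2) - x₀
  have hG : ContDiff ℝ 2 G := (hψ.comp (by fun_prop)).sub contDiff_const
  have hGd : Differentiable ℝ G := hG.differentiable two_ne_zero
  have hstrip : ∀ y t, ψ (y, t + y * (x₀ / 2)) = x₀ + y * G t := graph_eq_strip hψ hchar hmin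
  have hG' : ∀ t, 0 ≤ deriv G t := fun t => nonneg_of_forall_one_add_sq_mul_ne_zero fun y => by
    have hP := graphP_ne_zero hψ hchar hmin (y, t + y * (x₀ / 2))
    rw [graphP, partialT_eq_of_strip (hψ.differentiable two_ne_zero) hGd hstrip] at hP
    convert hP using 1
    ring
  obtain ⟨t₀, ht₀⟩ := exists_deriv_ne_zero_of_strip hGd hstrip hnp
  obtain ⟨a, b, hab, hpos⟩ :=
    exists_Ioo_forall_pos (hG.continuous_deriv one_le_two) ((hG' t₀).lt_of_ne' ht₀)
  refine ⟨(x₀, 0, 0), a, b, hab, G, hG.contDiffOn, hpos, fun y t _ => ?_⟩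
  simp only [hmul, Set.mem_ofPred_eq]
  convert (hstrip y t).symm using 3 <;> ring
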